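/- arXiv:1712.08564 — 3 statements merged into one kernel-verified Lean document; each statement's English description precedes it below -/
import Mathlib

section
/- Let two circles with centers c₁, c₂ ∈ ℂ and radii R₁, R₂ > 0 intersect orthogonally, and let z be one of their intersection points. Consider a triangle inscribed in the first circle with one vertex at z and one side subtending an inscribed angle θ over a chord through z; if the corresponding chord is also a chord of a configuration where the inscribed angle in the second circle over the same chord is φ, then θ + φ = π/2 and cot θ = R₁/R₂. In particular cot θ + cot φ = R₁/R₂ + R₂/R₁. -/
/-!
Put `a = z - c₁`, `e = c₂ - c₁`, `D = R₁² + R₂² = |e|²`. Orthogonality gives `Re (a ē) = R₁²`, and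
`|a ē|² = R₁² D` then forces `a ē = R₁² ± i R₁ R₂`; the two intersection points take the two
signs, so the common chord has length `2 R₁ R₂ / √D`. By the law of sines
`sin θ = |z - w| / (2 R₁) = R₂ / √D` and `sin φ = R₁ / √D`, so `sin² θ + sin² φ = 1`; for acute
angles this means `θ + φ = π / 2`, whence `cot θ = sin φ / sin θ = R₁ / R₂`.
-/

open EuclideanGeometry ComplexConjugate

noncomputable def rcot (x : ℝ) : ℝ := Real.cos x / Real.sin x

namespace EuclideanGeometry.Sphere

variable {V P : Type*} [NormedAddCommGroup V] [InnerProductSpace ℝ V] [MetricSpace P]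
  [NormedAddTorsor V P] [hd2 : Fact (Module.finrank ℝ V = 2)]

theorem sin_angle_eq_dist_div_two_mul_radius {s : Sphere P} {p₁ p₂ p₃ : P} (hp₁ : p₁ ∈ s)
    (hp₂ : p₂ ∈ s) (hp₃ : p₃ ∈ s) (hp₁p₂ : p₁ ≠ p₂) (hp₁p₃ : p₁ ≠ p₃) (hp₂p₃ : p₂ ≠ p₃) :
    Real.sin (∠ p₁ p₂ p₃) = dist p₁ p₃ / (2 * s.radius) := by
  have : FiniteDimensional ℝ V := .of_fact_finrank_eq_two
  have : Module.Oriented ℝ V (Fin 2) :=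
    ⟨(Module.finBasisOfFinrankEq _ _ hd2.out).orientation⟩
  have habs : |Real.Angle.sin (∡ p₁ p₂ p₃)| = Real.sin (∠ p₁ p₂ p₃) := by
    rw [← Real.Angle.sin_toReal,
      Real.abs_sin_eq_sin_abs_of_abs_le_pi (Real.Angle.abs_toReal_le_pi _),
      ← angle_eq_abs_oangle_toReal hp₁p₂ hp₂p₃.symm]
  rw [← dist_div_sin_oangle_eq_two_mul_radius hp₁ hp₂ hp₃ hp₁p₂ hp₁p₃ hp₂p₃, habs,
    div_div_cancel₀ (dist_ne_zero.2 hp₁p₃)]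

end EuclideanGeometry.Sphere

namespace Complex

variable {c₁ c₂ : ℂ} {R₁ R₂ : ℝ}

theorem mul_conj_sub_eq_of_orthogonal (horth : ‖c₁ - c₂‖ ^ 2 = R₁ ^ 2 + R₂ ^ 2) {x : ℂ}
    (hx₁ : ‖x - c₁‖ = R₁) (hx₂ : ‖x - c₂‖ = R₂) :
    (x - c₁) * conj (c₂ - c₁) = R₁ ^ 2 + R₁ * R₂ * I ∨
      (x - c₁) * conj (c₂ - c₁) = R₁ ^ 2 - R₁ * R₂ * I := by
  set A := (x - c₁) * conj (c₂ - c₁)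
  have hre : A.re = R₁ ^ 2 := by
    have := normSq_sub (x - c₁) (c₂ - c₁)
    rw [sub_sub_sub_cancel_right, ← Complex.sq_norm, ← Complex.sq_norm, ← Complex.sq_norm,
      norm_sub_rev c₂, hx₁, hx₂, horth] at this
    linarith
  have him : A.im ^ 2 = (R₁ * R₂) ^ 2 := by
    rw [← sq_norm_sub_sq_re, hre, norm_mul, Complex.norm_conj, hx₁, mul_pow, norm_sub_rev, horth]
    ring
  rcases sq_eq_sq_iff_eq_or_eq_neg.1 him with h | h
  · left; apply Complex.ext <;> simp [hre, h, ← ofReal_pow]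
  · right; apply Complex.ext <;> simp [hre, h, ← ofReal_pow]

theorem dist_sq_mul_eq_of_orthogonal (horth : ‖c₁ - c₂‖ ^ 2 = R₁ ^ 2 + R₂ ^ 2) {z w : ℂ}
    (hzw : z ≠ w) (hz₁ : ‖z - c₁‖ = R₁) (hz₂ : ‖z - c₂‖ = R₂)
    (hw₁ : ‖w - c₁‖ = R₁) (hw₂ : ‖w - c₂‖ = R₂) :
    dist z w ^ 2 * (R₁ ^ 2 + R₂ ^ 2) = 4 * R₁ ^ 2 * R₂ ^ 2 := by
  have hc : c₂ - c₁ ≠ 0 := by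
    intro h
    rw [norm_sub_rev, h, norm_zero] at horth
    have hR₁ : R₁ = 0 := by nlinarith
    rw [hR₁, norm_eq_zero, sub_eq_zero] at hz₁ hw₁
    exact hzw (hz₁.trans hw₁.symm)
  have hne : (z - c₁) * conj (c₂ - c₁) ≠ (w - c₁) * conj (c₂ - c₁) := by
    rwa [Ne, mul_left_inj' ((map_ne_zero conj).2 hc), sub_left_inj]
  have hchord : (z - w) * conj (c₂ - c₁) = 2 * R₁ * R₂ * I ∨
      (z - w) * conj (c₂ - c₁) = -(2 * R₁ * R₂ * I) := by
    rw [show (z - w) * conj (c₂ - c₁) = (z - c₁) * conj (c₂ - c₁) - (w - c₁) * conj (c₂ - c₁) by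
      ring]
    rcases mul_conj_sub_eq_of_orthogonal horth hz₁ hz₂ with hz | hz <;>
      rcases mul_conj_sub_eq_of_orthogonal horth hw₁ hw₂ with hw | hw
    · exact absurd (hz.trans hw.symm) hne
    · left; rw [hz, hw]; ring
    · right; rw [hz, hw]; ring
    · exact absurd (hz.trans hw.symm) hne
  have hnorm : ‖(z - w) * conj (c₂ - c₁)‖ ^ 2 = 4 * R₁ ^ 2 * R₂ ^ 2 := by
    rcases hchord with h | h <;> rw [h] <;> norm_num [mul_pow, sq_abs]
  rwa [norm_mul, Complex.norm_conj, mul_pow, norm_sub_rev c₂, horth, ← dist_eq] at hnorm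

end Complex

namespace Real

theorem add_eq_pi_div_two_of_sin_sq_add_sin_sq {θ φ : ℝ} (hθ₀ : 0 ≤ θ) (hθ : θ ≤ π / 2)
    (hφ₀ : 0 ≤ φ) (hφ : φ ≤ π / 2) (h : sin θ ^ 2 + sin φ ^ 2 = 1) : θ + φ = π / 2 := by
  have hcos : cos θ = cos (π / 2 - φ) := by
    rw [cos_pi_div_two_sub, cos_eq_sqrt_one_sub_sin_sq (by linarith) hθ, ← h, add_sub_cancel_left,
      sqrt_sq (sin_nonneg_of_nonneg_of_le_pi hφ₀ (by linarith))]
  have := injOn_cos ⟨hθ₀, by linarith⟩ ⟨by linarith, by linarith⟩ hcos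
  linarith

end Real

theorem rcot_eq_sin_div_sin_of_add_eq_pi_div_two {θ φ : ℝ} (h : θ + φ = Real.pi / 2) :
    rcot θ = Real.sin φ / Real.sin θ := by
  rw [rcot, show θ = Real.pi / 2 - φ by linarith, Real.cos_pi_div_two_sub]

attribute [local instance] Complex.finrank_real_complex_fact

theorem stmt_17 (c₁ c₂ : ℂ) (R₁ R₂ : ℝ) (hR₁ : 0 < R₁) (hR₂ : 0 < R₂)
    (horth : ‖c₁ - c₂‖ ^ 2 = R₁ ^ 2 + R₂ ^ 2)
    -- `z` and `w` are the two intersection points, spanning the common chord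
    (z w : ℂ) (hzw : z ≠ w)
    (hz₁ : ‖z - c₁‖ = R₁) (hz₂ : ‖z - c₂‖ = R₂)
    (hw₁ : ‖w - c₁‖ = R₁) (hw₂ : ‖w - c₂‖ = R₂)
    -- `θ` is an inscribed angle in the first circle over the common chord
    (p : ℂ) (hp : ‖p - c₁‖ = R₁) (hpz : p ≠ z) (hpw : p ≠ w)
    -- `φ` is an inscribed angle in the second circle over the common chord
    (q : ℂ) (hq : ‖q - c₂‖ = R₂) (hqz : q ≠ z) (hqw : q ≠ w)
    (θ φ : ℝ) (hθ : θ = ∠ z p w) (hφ : φ = ∠ z q w)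
    (hθa : θ < Real.pi / 2) (hφa : φ < Real.pi / 2) :
    θ + φ = Real.pi / 2 ∧ rcot θ = R₁ / R₂ ∧
      rcot θ + rcot φ = R₁ / R₂ + R₂ / R₁ := by
  have hmem : ∀ {c x : ℂ} {R : ℝ}, ‖x - c‖ = R → x ∈ (⟨c, R⟩ : Sphere ℂ) := fun hx =>
    mem_sphere.2 ((Complex.dist_eq _ _).trans hx)
  have hsθ : Real.sin θ = dist z w / (2 * R₁) := hθ ▸
    Sphere.sin_angle_eq_dist_div_two_mul_radius (hmem hz₁) (hmem hp) (hmem hw₁) hpz.symm hzw hpw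
  have hsφ : Real.sin φ = dist z w / (2 * R₂) := hφ ▸
    Sphere.sin_angle_eq_dist_div_two_mul_radius (hmem hz₂) (hmem hq) (hmem hw₂) hqz.symm hzw hqw
  have hchord := Complex.dist_sq_mul_eq_of_orthogonal horth hzw hz₁ hz₂ hw₁ hw₂
  have hsum : θ + φ = Real.pi / 2 := by
    refine Real.add_eq_pi_div_two_of_sin_sq_add_sin_sq (hθ ▸ angle_nonneg _ _ _) hθa.le
      (hφ ▸ angle_nonneg _ _ _) hφa.le ?_
    rw [hsθ, hsφ]
    field_simp
    linear_combination hchord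
  have hL : dist z w ≠ 0 := dist_ne_zero.2 hzw
  have hcotθ : rcot θ = R₁ / R₂ := by
    rw [rcot_eq_sin_div_sin_of_add_eq_pi_div_two hsum, hsθ, hsφ]
    field_simp
  have hcotφ : rcot φ = R₂ / R₁ := by
    rw [rcot_eq_sin_div_sin_of_add_eq_pi_div_two (add_comm θ φ ▸ hsum), hsθ, hsφ]
    field_simp
  exact ⟨hsum, hcotθ, by rw [hcotθ, hcotφ]⟩
end

section
/- Let three circles with radii R₁, R₂, R₃ > 0 be mutually externally tangent in the plane. Then the radius R of the circle passing through their three pairwise tangency points satisfies R² = R₁R₂R₃/(R₁+R₂+R₃). Moreover this circle intersects each of the three given circles orthogonally. -/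
/-!
Stewart's theorem at each tangency point gives a nonsingular linear system for the squared
distances from the centre `c` to the three centres, whose solution is `R² + Rᵢ²`; this is the
orthogonality. The vectors `cᵢ - c` then have inner products `R² - RᵢRⱼ`, and since three vectors
in the plane have vanishing Gram determinant, `4R₁R₂R₃((R₁ + R₂ + R₃)R² - R₁R₂R₃) = 0`.
-/

open Module

theorem Matrix.det_gram_eq_zero_of_finrank_lt {𝕜 E ι : Type*} [RCLike 𝕜] [NormedAddCommGroup E]
    [InnerProductSpace 𝕜 E] [FiniteDimensional 𝕜 E] [Fintype ι] [DecidableEq ι] (v : ι → E)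
    (h : finrank 𝕜 E < Fintype.card ι) : (gram 𝕜 v).det = 0 := by
  by_contra hdet
  exact (det_gram_ne_zero_iff_linearIndependent.mp hdet).fintype_card_le_finrank.not_gt h

section Tangency

variable {E : Type*} [NormedAddCommGroup E] [InnerProductSpace ℝ E]

theorem norm_add_smul_sub_sq (u v : E) (t : ℝ) :
    ‖u + t • (v - u)‖ ^ 2 = (1 - t) * ‖u‖ ^ 2 + t * ‖v‖ ^ 2 - t * (1 - t) * ‖v - u‖ ^ 2 := by
  have hv : ‖v‖ ^ 2 = ‖u + (v - u)‖ ^ 2 := by rw [add_sub_cancel]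
  rw [hv, norm_add_sq_real, norm_add_sq_real, real_inner_smul_right, norm_smul,
    Real.norm_eq_abs, mul_pow, sq_abs]
  ring

theorem norm_tangencyPoint_sub_sq {c₁ c₂ p : E} {r₁ r₂ : ℝ} (hr : r₁ + r₂ ≠ 0)
    (h₁₂ : ‖c₁ - c₂‖ = r₁ + r₂) :
    (r₁ + r₂) * (‖c₁ + (r₁ / (r₁ + r₂)) • (c₂ - c₁) - p‖ ^ 2 + r₁ * r₂) =
      r₂ * ‖p - c₁‖ ^ 2 + r₁ * ‖p - c₂‖ ^ 2 := by
  have hz : c₁ + (r₁ / (r₁ + r₂)) • (c₂ - c₁) - p =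
      (c₁ - p) + (r₁ / (r₁ + r₂)) • ((c₂ - p) - (c₁ - p)) := by
    rw [sub_sub_sub_cancel_right]; abel
  rw [hz, norm_add_smul_sub_sq, sub_sub_sub_cancel_right, norm_sub_rev c₂ c₁, h₁₂,
    norm_sub_rev c₁, norm_sub_rev c₂]
  field_simp
  ring

theorem norm_sub_sq_eq_of_mem_circle_tangencyPoints {c₁ c₂ c₃ p : E} {R R₁ R₂ R₃ : ℝ}
    (hR₁ : 0 < R₁) (hR₂ : 0 < R₂) (hR₃ : 0 < R₃)
    (h₁₂ : ‖c₁ - c₂‖ = R₁ + R₂) (h₂₃ : ‖c₂ - c₃‖ = R₂ + R₃) (h₃₁ : ‖c₃ - c₁‖ = R₃ + R₁)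
    (h₁ : ‖c₁ + (R₁ / (R₁ + R₂)) • (c₂ - c₁) - p‖ = R)
    (h₂ : ‖c₂ + (R₂ / (R₂ + R₃)) • (c₃ - c₂) - p‖ = R)
    (h₃ : ‖c₃ + (R₃ / (R₃ + R₁)) • (c₁ - c₃) - p‖ = R) :
    ‖p - c₁‖ ^ 2 = R ^ 2 + R₁ ^ 2 := by
  have e₁ := norm_tangencyPoint_sub_sq (p := p) (by positivity) h₁₂
  have e₂ := norm_tangencyPoint_sub_sq (p := p) (by positivity) h₂₃
  have e₃ := norm_tangencyPoint_sub_sq (p := p) (by positivity) h₃₁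
  rw [h₁] at e₁; rw [h₂] at e₂; rw [h₃] at e₃
  have h : (2 * R₂ * R₃) * ‖p - c₁‖ ^ 2 = (2 * R₂ * R₃) * (R ^ 2 + R₁ ^ 2) := by
    linear_combination R₁ * e₂ - R₂ * e₃ - R₃ * e₁
  exact mul_left_cancel₀ (by positivity) h

end Tangency

theorem radius_sq_of_orthogonal_to_tangent_circles {E : Type*} [NormedAddCommGroup E]
    [InnerProductSpace ℝ E] [FiniteDimensional ℝ E] (hE : finrank ℝ E ≤ 2)
    {c₁ c₂ c₃ p : E} {R R₁ R₂ R₃ : ℝ} (hR : R₁ * R₂ * R₃ ≠ 0)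
    (h₁₂ : ‖c₁ - c₂‖ = R₁ + R₂) (h₂₃ : ‖c₂ - c₃‖ = R₂ + R₃) (h₃₁ : ‖c₃ - c₁‖ = R₃ + R₁)
    (h₁ : ‖p - c₁‖ ^ 2 = R ^ 2 + R₁ ^ 2) (h₂ : ‖p - c₂‖ ^ 2 = R ^ 2 + R₂ ^ 2)
    (h₃ : ‖p - c₃‖ ^ 2 = R ^ 2 + R₃ ^ 2) :
    (R₁ + R₂ + R₃) * R ^ 2 = R₁ * R₂ * R₃ := by
  have hdet := Matrix.det_gram_eq_zero_of_finrank_lt (𝕜 := ℝ) ![c₁ - p, c₂ - p, c₃ - p]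
    (by simp only [Fintype.card_fin]; omega)
  have n₁ : ‖c₁ - p‖ ^ 2 = R ^ 2 + R₁ ^ 2 := by rw [norm_sub_rev, h₁]
  have n₂ : ‖c₂ - p‖ ^ 2 = R ^ 2 + R₂ ^ 2 := by rw [norm_sub_rev, h₂]
  have n₃ : ‖c₃ - p‖ ^ 2 = R ^ 2 + R₃ ^ 2 := by rw [norm_sub_rev, h₃]
  have i₁₂ : inner ℝ (c₁ - p) (c₂ - p) = R ^ 2 - R₁ * R₂ := by
    have := norm_sub_sq_real (c₁ - p) (c₂ - p)
    rw [sub_sub_sub_cancel_right, h₁₂, n₁, n₂] at this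
    linear_combination this / 2
  have i₂₃ : inner ℝ (c₂ - p) (c₃ - p) = R ^ 2 - R₂ * R₃ := by
    have := norm_sub_sq_real (c₂ - p) (c₃ - p)
    rw [sub_sub_sub_cancel_right, h₂₃, n₂, n₃] at this
    linear_combination this / 2
  have i₃₁ : inner ℝ (c₃ - p) (c₁ - p) = R ^ 2 - R₃ * R₁ := by
    have := norm_sub_sq_real (c₃ - p) (c₁ - p)
    rw [sub_sub_sub_cancel_right, h₃₁, n₃, n₁] at this
    linear_combination this / 2
  simp only [Matrix.det_fin_three, Matrix.gram_apply, Matrix.cons_val, real_inner_self_eq_norm_sq,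
    n₁, n₂, n₃, i₁₂, i₂₃, i₃₁, real_inner_comm (c₁ - p), real_inner_comm (c₂ - p),
    real_inner_comm (c₃ - p)] at hdet
  have h : R₁ * R₂ * R₃ * ((R₁ + R₂ + R₃) * R ^ 2) = R₁ * R₂ * R₃ * (R₁ * R₂ * R₃) := by
    linear_combination hdet / 4
  exact mul_left_cancel₀ hR h

theorem stmt_18_general (c₁ c₂ c₃ : ℂ) (R₁ R₂ R₃ : ℝ)
    (hR₁ : 0 < R₁) (hR₂ : 0 < R₂) (hR₃ : 0 < R₃)
    -- mutual external tangency
    (h₁₂ : ‖c₁ - c₂‖ = R₁ + R₂)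
    (h₂₃ : ‖c₂ - c₃‖ = R₂ + R₃)
    (h₃₁ : ‖c₃ - c₁‖ = R₃ + R₁)
    -- pairwise tangency points
    (z₁₂ z₂₃ z₃₁ : ℂ)
    (hz₁₂ : z₁₂ = c₁ + (R₁ / (R₁ + R₂)) • (c₂ - c₁))
    (hz₂₃ : z₂₃ = c₂ + (R₂ / (R₂ + R₃)) • (c₃ - c₂))
    (hz₃₁ : z₃₁ = c₃ + (R₃ / (R₃ + R₁)) • (c₁ - c₃))
    -- any circle through the three tangency points
    (c : ℂ) (R : ℝ)
    (h₁ : ‖z₁₂ - c‖ = R) (h₂ : ‖z₂₃ - c‖ = R)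
    (h₃ : ‖z₃₁ - c‖ = R) :
    R ^ 2 = R₁ * R₂ * R₃ / (R₁ + R₂ + R₃) ∧
      ‖c - c₁‖ ^ 2 = R ^ 2 + R₁ ^ 2 ∧
      ‖c - c₂‖ ^ 2 = R ^ 2 + R₂ ^ 2 ∧
      ‖c - c₃‖ ^ 2 = R ^ 2 + R₃ ^ 2 := by
  subst hz₁₂ hz₂₃ hz₃₁
  have o₁ := norm_sub_sq_eq_of_mem_circle_tangencyPoints hR₁ hR₂ hR₃ h₁₂ h₂₃ h₃₁ h₁ h₂ h₃
  have o₂ := norm_sub_sq_eq_of_mem_circle_tangencyPoints hR₂ hR₃ hR₁ h₂₃ h₃₁ h₁₂ h₂ h₃ h₁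
  have o₃ := norm_sub_sq_eq_of_mem_circle_tangencyPoints hR₃ hR₁ hR₂ h₃₁ h₁₂ h₂₃ h₃ h₁ h₂
  have hrad := radius_sq_of_orthogonal_to_tangent_circles Complex.finrank_real_complex.le
    (by positivity) h₁₂ h₂₃ h₃₁ o₁ o₂ o₃
  refine ⟨?_, o₁, o₂, o₃⟩
  rw [eq_div_iff (by positivity)]
  linarith

theorem stmt_18 (c₁ c₂ c₃ : ℂ) (R₁ R₂ R₃ : ℝ)
    (hR₁ : 0 < R₁) (hR₂ : 0 < R₂) (hR₃ : 0 < R₃)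
    -- mutual external tangency
    (h₁₂ : ‖c₁ - c₂‖ = R₁ + R₂)
    (h₂₃ : ‖c₂ - c₃‖ = R₂ + R₃)
    (h₃₁ : ‖c₃ - c₁‖ = R₃ + R₁)
    -- pairwise tangency points
    (z₁₂ z₂₃ z₃₁ : ℂ)
    (hz₁₂ : z₁₂ = c₁ + (R₁ / (R₁ + R₂)) • (c₂ - c₁))
    (hz₂₃ : z₂₃ = c₂ + (R₂ / (R₂ + R₃)) • (c₃ - c₂))
    (hz₃₁ : z₃₁ = c₃ + (R₃ / (R₃ + R₁)) • (c₁ - c₃))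
    -- any circle through the three tangency points
    (c : ℂ) (R : ℝ) (hR : 0 < R)
    (h₁ : ‖z₁₂ - c‖ = R) (h₂ : ‖z₂₃ - c‖ = R)
    (h₃ : ‖z₃₁ - c‖ = R) :
    R ^ 2 = R₁ * R₂ * R₃ / (R₁ + R₂ + R₃) ∧
      ‖c - c₁‖ ^ 2 = R ^ 2 + R₁ ^ 2 ∧
      ‖c - c₂‖ ^ 2 = R ^ 2 + R₂ ^ 2 ∧
      ‖c - c₃‖ ^ 2 = R ^ 2 + R₃ ^ 2 :=
  stmt_18_general c₁ c₂ c₃ R₁ R₂ R₃ hR₁ hR₂ hR₃ h₁₂ h₂₃ h₃₁ z₁₂ z₂₃ z₃₁ hz₁₂ hz₂₃ hz₃₁ c R h₁ h₂ h₃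
end

section
/- Let three circles of radii R₁,R₂,R₃ > 0 with centers c₁,c₂,c₃ ∈ ℂ be mutually externally tangent, with pairwise tangency points z₁₂, z₂₃, z₃₁. Let R denote the radius of the circle through z₁₂, z₂₃, z₃₁. Then z₂₃ − z₁₂ = R₂·((c₂−c₁)/(R₁+R₂) + (c₃−c₂)/(R₃+R₂)) and also z₂₃ − z₁₂ = i·R·((c₂−c₁)/(R₁+R₂) − (c₃−c₂)/(R₃+R₂)). -/
/-!
Put `p = c₂ - c₁`, `q = c₃ - c₂`, `a = R₁ + R₂`, `b = R₂ + R₃`. The first identity is pure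
algebra. For the second, multiply by `conj q` (and use `q * conj q = b²`): it becomes
`R₂ (W + ab) = i R (W - ab)` for `W = p * conj q`. The side lengths of the triangle of centres
determine `W` up to conjugation — `Re W` by the law of cosines and `(Im W)²` by `|W| = ab` — and the
orientation fixes the sign of `Im W`; with `R² (R₁ + R₂ + R₃) = R₁ R₂ R₃` this gives
`W = (R₁R₃ - R₁R₂ - R₂R₃ - R₂²) - 2R(R₁ + R₂ + R₃) i`, for which the identity is checked directly.
-/

open ComplexConjugate

namespace Complex

theorem two_mul_re_mul_conj (p q : ℂ) :
    2 * (p * conj q).re = ‖p + q‖ ^ 2 - ‖p‖ ^ 2 - ‖q‖ ^ 2 := by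
  simp only [Complex.sq_norm, normSq_add]
  ring

theorem im_mul_conj_sq (p q : ℂ) :
    (p * conj q).im ^ 2 = ‖p‖ ^ 2 * ‖q‖ ^ 2 - (p * conj q).re ^ 2 := by
  rw [← sq_norm_sub_sq_re, Complex.norm_mul, norm_conj, mul_pow]

theorem im_mul_conj_neg_of_im_div_pos {p q : ℂ} (h : 0 < ((p + q) / p).im) :
    (p * conj q).im < 0 := by
  have key : ((p + q) / p).im = -(p * conj q).im / normSq p := by
    rw [div_im]
    simp only [add_re, add_im, mul_im, conj_re, conj_im]
    ring
  rw [key] at h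
  by_contra hc
  exact h.not_ge (div_nonpos_of_nonpos_of_nonneg (by linarith) (normSq_nonneg p))

end Complex

theorem tangencyPoint_sub {c₁ c₂ c₃ : ℂ} {R₁ R₂ R₃ : ℝ} (h₁₂ : R₁ + R₂ ≠ 0) (h₂₃ : R₂ + R₃ ≠ 0) :
    c₂ + (R₂ / (R₂ + R₃)) • (c₃ - c₂) - (c₁ + (R₁ / (R₁ + R₂)) • (c₂ - c₁)) =
      (R₂ : ℂ) * ((c₂ - c₁) / (R₁ + R₂) + (c₃ - c₂) / (R₃ + R₂)) := by
  have h₁₂' : (R₁ : ℂ) + R₂ ≠ 0 := by exact_mod_cast h₁₂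
  have h₂₃' : (R₂ : ℂ) + R₃ ≠ 0 := by exact_mod_cast h₂₃
  have h₃₂' : (R₃ : ℂ) + R₂ ≠ 0 := by rwa [add_comm]
  simp only [Complex.real_smul, Complex.ofReal_div, Complex.ofReal_add]
  field_simp
  ring

theorem mul_conj_of_tangent {p q : ℂ} {R₁ R₂ R₃ R : ℝ}
    (hR₁ : 0 < R₁) (hR₂ : 0 < R₂) (hR₃ : 0 < R₃) (hR : 0 < R)
    (hR2 : R ^ 2 * (R₁ + R₂ + R₃) = R₁ * R₂ * R₃)
    (hp : ‖p‖ = R₁ + R₂) (hq : ‖q‖ = R₂ + R₃) (hpq : ‖p + q‖ = R₃ + R₁)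
    (horient : 0 < ((p + q) / p).im) :
    p * conj q =
      (R₁ * R₃ - R₁ * R₂ - R₂ * R₃ - R₂ ^ 2 : ℝ) - (2 * R * (R₁ + R₂ + R₃) : ℝ) * Complex.I := by
  have hre : (p * conj q).re = R₁ * R₃ - R₁ * R₂ - R₂ * R₃ - R₂ ^ 2 := by
    have h := Complex.two_mul_re_mul_conj p q
    rw [hp, hq, hpq] at h
    linear_combination h / 2
  have him_sq : (p * conj q).im ^ 2 = (2 * R * (R₁ + R₂ + R₃)) ^ 2 := by
    have h := Complex.im_mul_conj_sq p q
    rw [hp, hq, hre] at h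
    linear_combination h - 4 * (R₁ + R₂ + R₃) * hR2
  have him : (p * conj q).im = -(2 * R * (R₁ + R₂ + R₃)) := by
    have hneg := Complex.im_mul_conj_neg_of_im_div_pos horient
    have h : (-(p * conj q).im) ^ 2 = (2 * R * (R₁ + R₂ + R₃)) ^ 2 := by rw [neg_sq, him_sq]
    linarith [(pow_left_inj₀ (neg_nonneg.2 hneg.le) (by positivity) two_ne_zero).1 h]
  apply Complex.ext <;> simp [hre, him, sq]

theorem mul_div_add_div_eq_of_mul_conj {p q α β : ℂ} {a b : ℝ} (ha : a ≠ 0) (hq : ‖q‖ = b)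
    (hb : b ≠ 0) (h : α * (p * conj q + a * b) = β * (p * conj q - a * b)) :
    α * (p / a + q / b) = β * (p / a - q / b) := by
  have hq0 : conj q ≠ 0 := by
    rw [map_ne_zero, ← norm_ne_zero_iff, hq]
    exact hb
  have hqq : q * conj q = b ^ 2 := by rw [Complex.mul_conj', hq]
  have ha' : (a : ℂ) ≠ 0 := by exact_mod_cast ha
  have hb' : (b : ℂ) ≠ 0 := by exact_mod_cast hb
  field_simp
  apply mul_right_cancel₀ hq0
  linear_combination b * h + a * (α + β) * hqq

theorem stmt_19 (c₁ c₂ c₃ : ℂ) (R₁ R₂ R₃ : ℝ)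
    (hR₁ : 0 < R₁) (hR₂ : 0 < R₂) (hR₃ : 0 < R₃)
    -- mutual external tangency
    (h₁₂ : ‖c₁ - c₂‖ = R₁ + R₂)
    (h₂₃ : ‖c₂ - c₃‖ = R₂ + R₃)
    (h₃₁ : ‖c₃ - c₁‖ = R₃ + R₁)
    -- the triangle of centers is positively oriented
    (horient : ((c₃ - c₁) / (c₂ - c₁)).im > 0)
    -- pairwise tangency points
    (z₁₂ z₂₃ : ℂ)
    (hz₁₂ : z₁₂ = c₁ + (R₁ / (R₁ + R₂)) • (c₂ - c₁))
    (hz₂₃ : z₂₃ = c₂ + (R₂ / (R₂ + R₃)) • (c₃ - c₂))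
    -- the radius of the circle through the tangency points
    (R : ℝ) (hR : 0 < R) (hR2 : R ^ 2 = R₁ * R₂ * R₃ / (R₁ + R₂ + R₃)) :
    z₂₃ - z₁₂ =
        (R₂ : ℂ) * ((c₂ - c₁) / (R₁ + R₂) + (c₃ - c₂) / (R₃ + R₂)) ∧
      z₂₃ - z₁₂ =
        Complex.I * R * ((c₂ - c₁) / (R₁ + R₂) - (c₃ - c₂) / (R₃ + R₂)) := by
  have hS : 0 < R₁ + R₂ + R₃ := by positivity
  have hR2' : R ^ 2 * (R₁ + R₂ + R₃) = R₁ * R₂ * R₃ := (eq_div_iff hS.ne').1 hR2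
  have part1 : z₂₃ - z₁₂ = (R₂ : ℂ) * ((c₂ - c₁) / (R₁ + R₂) + (c₃ - c₂) / (R₃ + R₂)) :=
    hz₁₂ ▸ hz₂₃ ▸ tangencyPoint_sub (by positivity) (by positivity)
  refine ⟨part1, part1.trans ?_⟩
  have hW := mul_conj_of_tangent hR₁ hR₂ hR₃ hR hR2' (by rwa [norm_sub_rev]) (by rwa [norm_sub_rev])
    (by rwa [sub_add_sub_cancel']) (by rwa [sub_add_sub_cancel'])
  have hkey : (R₂ : ℂ) * ((c₂ - c₁) * conj (c₃ - c₂) + (R₁ + R₂ : ℝ) * (R₃ + R₂ : ℝ)) =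
      Complex.I * R * ((c₂ - c₁) * conj (c₃ - c₂) - (R₁ + R₂ : ℝ) * (R₃ + R₂ : ℝ)) := by
    rw [hW]
    push_cast
    have hR2ℂ : (R : ℂ) ^ 2 * (R₁ + R₂ + R₃) = R₁ * R₂ * R₃ := by exact_mod_cast hR2'
    linear_combination -2 * hR2ℂ + 2 * R ^ 2 * (R₁ + R₂ + R₃) * Complex.I_sq
  exact_mod_cast mul_div_add_div_eq_of_mul_conj (by positivity)
    (by rw [add_comm]; rwa [norm_sub_rev]) (by positivity) hkey
end
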